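/- arXiv:2502.09319 — 3 statements merged into one kernel-verified Lean document; each statement's English description precedes it below -/
import Mathlib

section
/- Let m ∈ ℝ^d with m_i > 0, λ > 0, and define M = { μ ∈ ℝ^d : ∑_{i∈S} μ_i m_i ≥ −λ for every subset S ⊆ {1,...,d} }. If μ ∈ M, then the supremum over x ≤ m (coordinatewise) of (min_i x_i/m_i) + (1/λ)⟨μ, x⟩ equals (1/λ)⟨m, μ⟩ + 1, and is attained at x = m. -/
/-!
Put `t = minᵢ xᵢ / mᵢ`, so that `t ≤ 1` and `0 ≤ m - x ≤ (1 - t) m`. In `⟨μ, x - m⟩` only the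
coordinates with `μᵢ < 0` contribute positively, and there `μᵢ (xᵢ - mᵢ) ≤ (1 - t) (-μᵢ mᵢ)`;
the constraint for `S = {i | μᵢ < 0}` then gives `⟨μ, x - m⟩ ≤ λ (1 - t)`, which is exactly
the claimed bound on the objective.
-/

open Finset

theorem inf'_div_mul_le {ι : Type*} {s : Finset ι} (hs : s.Nonempty) {x m : ι → ℝ} {i : ι}
    (hi : i ∈ s) (hm : 0 < m i) : s.inf' hs (fun j => x j / m j) * m i ≤ x i :=
  (le_div_iff₀ hm).mp (inf'_le _ hi)

theorem inf'_div_self {ι : Type*} {s : Finset ι} (hs : s.Nonempty) {m : ι → ℝ}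
    (hm : ∀ i, m i ≠ 0) : s.inf' hs (fun i => m i / m i) = 1 := by
  simp_rw [div_self (hm _)]
  exact inf'_const hs 1

section
variable {ι : Type*} [Fintype ι]

theorem neg_mul_le_sum_mul_of_forall_sum_subset (μ m y : ι → ℝ) {c lam : ℝ} (hc : 0 ≤ c)
    (hy₀ : ∀ i, 0 ≤ y i) (hy : ∀ i, y i ≤ c * m i)
    (hμ : ∀ S : Finset ι, -lam ≤ ∑ i ∈ S, μ i * m i) :
    -(c * lam) ≤ ∑ i, μ i * y i := by
  set S := univ.filter fun i => μ i < 0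
  calc -(c * lam) = c * -lam := by ring
    _ ≤ c * ∑ i ∈ S, μ i * m i := mul_le_mul_of_nonneg_left (hμ S) hc
    _ = ∑ i ∈ S, μ i * (c * m i) := by rw [mul_sum]; exact sum_congr rfl fun i _ => by ring
    _ ≤ ∑ i ∈ S, μ i * y i := sum_le_sum fun i hi =>
        mul_le_mul_of_nonpos_left (hy i) (mem_filter.mp hi).2.le
    _ ≤ ∑ i, μ i * y i := sum_le_sum_of_subset_of_nonneg (subset_univ S) fun i _ hi =>
        mul_nonneg (not_lt.mp fun h => hi (mem_filter.mpr ⟨mem_univ i, h⟩)) (hy₀ i)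

theorem inf'_div_add_inv_mul_sum_le (hne : (univ : Finset ι).Nonempty) {m μ x : ι → ℝ}
    {lam : ℝ} (hm : ∀ i, 0 < m i) (hlam : 0 < lam)
    (hμ : ∀ S : Finset ι, -lam ≤ ∑ i ∈ S, μ i * m i) (hx : ∀ i, x i ≤ m i) :
    univ.inf' hne (fun i => x i / m i) + 1 / lam * ∑ i, μ i * x i ≤
      1 / lam * ∑ i, m i * μ i + 1 := by
  set t := univ.inf' hne (fun i => x i / m i)
  have ht_le : ∀ i, t * m i ≤ x i := fun i => inf'_div_mul_le hne (mem_univ i) (hm i)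
  have ht_one : t ≤ 1 := by
    obtain ⟨i, hi⟩ := hne
    exact (inf'_le _ hi).trans ((div_le_one (hm i)).mpr (hx i))
  have key := neg_mul_le_sum_mul_of_forall_sum_subset μ m (m - x) (sub_nonneg.mpr ht_one)
    (fun i => sub_nonneg.mpr (hx i)) (fun i => by simp only [Pi.sub_apply]; linarith [ht_le i])
    hμ
  have hsum : ∑ i, μ i * x i ≤ ∑ i, m i * μ i + lam * (1 - t) := by
    simp only [Pi.sub_apply, mul_sub, sum_sub_distrib] at key
    simp only [mul_comm (m _)]
    linarith
  calc t + 1 / lam * ∑ i, μ i * x i ≤ t + 1 / lam * (∑ i, m i * μ i + lam * (1 - t)) := by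
        gcongr
    _ = 1 / lam * ∑ i, m i * μ i + 1 := by field_simp; ring

end

/-- if μ ∈ M (power-set constraints ∑_{i∈S} μ_i m_i ≥ −λ), then
sup_{x ≤ m} [min_i x_i/m_i + (1/λ)⟨μ,x⟩] = (1/λ)⟨m,μ⟩ + 1, attained at x = m. -/
theorem stmt5 (d : ℕ) (hd : 1 ≤ d) (m μ : Fin d → ℝ) (lam : ℝ)
    (hm : ∀ i, 0 < m i) (hlam : 0 < lam)
    (hμ : ∀ S : Finset (Fin d), -lam ≤ ∑ i ∈ S, μ i * m i) :
    IsGreatest {r : ℝ | ∃ x : Fin d → ℝ, (∀ i, x i ≤ m i) ∧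
        r = Finset.univ.inf' ⟨⟨0, hd⟩, Finset.mem_univ _⟩ (fun i => x i / m i)
          + (1 / lam) * ∑ i, μ i * x i}
      ((1 / lam) * (∑ i, m i * μ i) + 1) ∧
    Finset.univ.inf' ⟨⟨0, hd⟩, Finset.mem_univ _⟩ (fun i => m i / m i)
      + (1 / lam) * ∑ i, μ i * m i = (1 / lam) * (∑ i, m i * μ i) + 1 := by
  have hattain : univ.inf' ⟨⟨0, hd⟩, mem_univ _⟩ (fun i => m i / m i)
      + (1 / lam) * ∑ i, μ i * m i = (1 / lam) * (∑ i, m i * μ i) + 1 := by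
    have hone := inf'_div_self (s := univ) ⟨⟨0, hd⟩, mem_univ _⟩ fun i => (hm i).ne'
    simp only [mul_comm (μ _)]
    linarith
  refine ⟨⟨⟨m, fun i => le_rfl, hattain.symm⟩, ?_⟩, hattain⟩
  rintro r ⟨x, hx, rfl⟩
  exact inf'_div_add_inv_mul_sum_le _ hm hlam hμ hx
end

section
/- Let m ∈ ℝ^d with m_i > 0, λ > 0, and define M = { μ ∈ ℝ^d : ∑_{i∈S} μ_i m_i ≥ −λ for all S ⊆ {1,...,d} }. If μ ∉ M, then sup_{x ≤ m} [min_i (x_i/m_i) + (1/λ)⟨μ, x⟩] = +∞. -/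
/-! Pick `S` with `∑_{i∈S} μ_i m_i < -λ` and move along the ray `x = t • m` on `S`, `x = m` off `S`,
with `t ≤ 0`. The minimum of `x_i / m_i` is then `t`, so the objective equals
`t (1 + (1/λ) ∑_{i∈S} μ_i m_i) + (1/λ) ∑_{i∉S} μ_i m_i`, an affine function of `t` with
negative slope, so every value above the constant term is attained. -/

open Finset

section Piecewise

variable {ι : Type*} [DecidableEq ι] {S : Finset ι} {m : ι → ℝ} {t : ℝ}

lemma Finset.piecewise_smul_le_self (hm : 0 ≤ m) (ht : t ≤ 1) : S.piecewise (t • m) m ≤ m := by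
  intro i
  by_cases hi : i ∈ S
  · simpa [hi] using mul_le_of_le_one_left (hm i) ht
  · simp [hi]

lemma Finset.inf'_piecewise_smul_div [Fintype ι] (hm : ∀ i, 0 < m i) (hS : S.Nonempty) (ht : t ≤ 1)
    (hne : (univ : Finset ι).Nonempty) :
    univ.inf' hne (fun i => S.piecewise (t • m) m i / m i) = t := by
  have hratio : ∀ i, S.piecewise (t • m) m i / m i = if i ∈ S then t else 1 := by
    intro i
    by_cases hi : i ∈ S <;> simp [hi, (hm i).ne']
  simp_rw [hratio]
  obtain ⟨i₀, hi₀⟩ := hS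
  refine le_antisymm ((inf'_le _ (mem_univ i₀)).trans_eq (if_pos hi₀)) (le_inf' _ _ fun i _ => ?_)
  split_ifs <;> simp [ht]

lemma Finset.sum_mul_piecewise_smul [Fintype ι] (μ : ι → ℝ) :
    ∑ i, μ i * S.piecewise (t • m) m i = t * ∑ i ∈ S, μ i * m i + ∑ i ∈ Sᶜ, μ i * m i := by
  rw [← sum_add_sum_compl S, mul_sum]
  congr 1 <;> refine sum_congr rfl fun i hi => ?_
  · rw [piecewise_eq_of_mem _ _ _ hi, Pi.smul_apply, smul_eq_mul]
    ring
  · simp [mem_compl.1 hi]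

end Piecewise

/-- if μ ∉ M, then sup_{x ≤ m}[min_i x_i/m_i + (1/λ)⟨μ,x⟩] = +∞,
i.e. the set of attainable values is unbounded above. -/
theorem stmt6 (d : ℕ) (hd : 1 ≤ d) (m μ : Fin d → ℝ) (lam : ℝ)
    (hm : ∀ i, 0 < m i) (hlam : 0 < lam)
    (hμ : ¬ ∀ S : Finset (Fin d), -lam ≤ ∑ i ∈ S, μ i * m i) :
    ¬ BddAbove {r : ℝ | ∃ x : Fin d → ℝ, (∀ i, x i ≤ m i) ∧
        r = Finset.univ.inf' ⟨⟨0, hd⟩, Finset.mem_univ _⟩ (fun i => x i / m i)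
          + (1 / lam) * ∑ i, μ i * x i} := by
  push Not at hμ
  obtain ⟨S, hS⟩ := hμ
  have hSne : S.Nonempty := nonempty_iff_ne_empty.2 fun h => by simp [h] at hS; linarith
  set c := ∑ i ∈ S, μ i * m i
  set D := ∑ i ∈ Sᶜ, μ i * m i
  have hslope : 1 + c / lam < 0 := by linarith [(div_lt_iff₀ hlam).2 (by linarith : c < -1 * lam)]
  refine fun hbdd => not_bddAbove_Ici (D / lam) (hbdd.mono fun r hr => ?_)
  set t := (r - D / lam) / (1 + c / lam)
  have ht : t ≤ 0 := div_nonpos_of_nonneg_of_nonpos (sub_nonneg.2 hr) hslope.le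
  have htk : t * (1 + c / lam) = r - D / lam := div_mul_cancel₀ _ hslope.ne
  refine ⟨S.piecewise (t • m) m, piecewise_smul_le_self (fun i => (hm i).le) (by linarith), ?_⟩
  rw [inf'_piecewise_smul_div hm hSne (by linarith) ⟨⟨0, hd⟩, mem_univ _⟩, sum_mul_piecewise_smul]
  linear_combination -htk
end

section
/- Define s(v) = sup_{z ≤ 0} [min_i z_i + ⟨z, v⟩] for v ∈ ℝ^d, where z ≤ 0 means z_i ≤ 0 for all i. If ∑_{i∈S} v_i ≥ −1 for every subset S ⊆ {1,...,d}, then s(v) = 0. -/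
/-! For `z ≤ 0` bounded below by `c` we show `⟨z, v⟩ ≤ -c`; with `c = min z` this gives the
bound, and `z = 0` attains `0`. Shift `z` by some `m ≥ max z` and peel the coordinates off from the
largest: if `z` is largest at `a`, then `∑ (z i - m) v i = (z a - m) ∑ v + ∑_{i ≠ a} (z i - z a) v i`.
The first term is at most `m - z a` because every subset sum of `v` is at least `-1`, and the
second is at most `z a - c` by induction. -/

open Finset

theorem sum_sub_mul_le_of_forall_neg_one_le_sum {ι : Type*} {v : ι → ℝ}
    (hv : ∀ t : Finset ι, -1 ≤ ∑ i ∈ t, v i) (z : ι → ℝ) (s : Finset ι) {c m : ℝ}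
    (hcm : c ≤ m) (hc : ∀ i ∈ s, c ≤ z i) (hm : ∀ i ∈ s, z i ≤ m) :
    ∑ i ∈ s, (z i - m) * v i ≤ m - c := by
  classical
  induction s using Finset.induction_on_max_value z generalizing m with
  | empty => simpa using hcm
  | insert a s ha hmax ih =>
    have hca : c ≤ z a := hc a (mem_insert_self a s)
    have ham : z a ≤ m := hm a (mem_insert_self a s)
    have hsplit : ∑ i ∈ insert a s, (z i - m) * v i =
        (z a - m) * ∑ i ∈ insert a s, v i + ∑ i ∈ s, (z i - z a) * v i := by
      rw [sum_insert ha, sum_insert ha, mul_add, mul_sum, add_assoc, ← sum_add_distrib]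
      exact congrArg _ (sum_congr rfl fun _ _ => by ring)
    have htop : (z a - m) * ∑ i ∈ insert a s, v i ≤ m - z a := by
      nlinarith [hv (insert a s)]
    have hrest : ∑ i ∈ s, (z i - z a) * v i ≤ z a - c :=
      ih hca (fun i hi => hc i (mem_insert_of_mem hi)) hmax
    linarith

theorem sum_mul_le_neg_of_forall_neg_one_le_sum {ι : Type*} {v : ι → ℝ}
    (hv : ∀ t : Finset ι, -1 ≤ ∑ i ∈ t, v i) (z : ι → ℝ) (s : Finset ι) {c : ℝ}
    (hc : ∀ i ∈ s, c ≤ z i) (hz : ∀ i ∈ s, z i ≤ 0) (hc₀ : c ≤ 0) :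
    ∑ i ∈ s, z i * v i ≤ -c := by
  simpa using sum_sub_mul_le_of_forall_neg_one_le_sum hv z s hc₀ hc hz

/-- if ∑_{i∈S} v_i ≥ −1 for every subset S, then
s(v) = sup_{z ≤ 0}[min_i z_i + ⟨z,v⟩] = 0 (attained at z = 0). -/
theorem stmt7 (d : ℕ) (hd : 1 ≤ d) (v : Fin d → ℝ)
    (hv : ∀ S : Finset (Fin d), -1 ≤ ∑ i ∈ S, v i) :
    IsGreatest {r : ℝ | ∃ z : Fin d → ℝ, (∀ i, z i ≤ 0) ∧
        r = Finset.univ.inf' ⟨⟨0, hd⟩, Finset.mem_univ _⟩ z + ∑ i, z i * v i}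
      0 := by
  refine ⟨⟨fun _ => 0, fun _ => le_rfl, by simpa using (inf'_const _ _).symm⟩, ?_⟩
  rintro r ⟨z, hz, rfl⟩
  have hmin : univ.inf' ⟨⟨0, hd⟩, mem_univ _⟩ z ≤ 0 := (inf'_le z (mem_univ _)).trans (hz ⟨0, hd⟩)
  have hsum := sum_mul_le_neg_of_forall_neg_one_le_sum hv z univ
    (fun i _ => inf'_le z (mem_univ i)) (fun i _ => hz i) hmin
  linarith
end
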